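/- arXiv:1510.07357 — 2 statements merged into one kernel-verified Lean document; each statement's English description precedes it below -/
import Mathlib

section
/- Let S be a set of points in the plane such that any two distinct points of S are at distance greater than r. Then for any point p, the number of points of S at distance at most 3r from p is at most 121. -/
/-!
Partition space into the half-open cubes of side `s` of a grid anchored at `p`. Two points of one
cube are at distance at most `√d · s`, so with `√d · s ≤ r` an `r`-separated set meets every cube
at most once. A point within `n · s` of `p` lies in one of the `(2n + 1)^d` cubes whose integer
coordinates are in `[-n, n]`. In the plane take `s = r / √2` and `n = 5`, which suffices because
`3√2 ≤ 5`: this gives at most `11² = 121` points.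
-/

open Finset

section GridCell

variable {ι : Type*} [Fintype ι]

noncomputable def gridCell (p : EuclideanSpace ℝ ι) (s : ℝ) (q : EuclideanSpace ℝ ι) : ι → ℤ :=
  fun i => ⌊(q i - p i) / s⌋

lemma floor_div_mem_Icc_of_abs_le {t s : ℝ} (hs : 0 < s) {n : ℕ} (h : |t| ≤ n * s) :
    ⌊t / s⌋ ∈ Icc (-n : ℤ) n := by
  have h' : |t / s| ≤ n := by rwa [abs_div, abs_of_pos hs, div_le_iff₀ hs]
  obtain ⟨hlo, hhi⟩ := abs_le.1 h'
  exact mem_Icc.2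
    ⟨Int.le_floor.2 (by exact_mod_cast hlo), Int.floor_le_iff.2 (by push_cast; linarith)⟩

lemma abs_sub_lt_of_floor_div_eq {x y c s : ℝ} (hs : 0 < s)
    (h : ⌊(x - c) / s⌋ = ⌊(y - c) / s⌋) : |x - y| < s := by
  have := Int.abs_sub_lt_one_of_floor_eq_floor h
  rwa [← sub_div, sub_sub_sub_cancel_right, abs_div, abs_of_pos hs, div_lt_one hs] at this

lemma gridCell_mem_piFinset [DecidableEq ι] {p q : EuclideanSpace ℝ ι} {s : ℝ} (hs : 0 < s)
    {n : ℕ} (h : dist p q ≤ n * s) :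
    gridCell p s q ∈ Fintype.piFinset fun _ => Icc (-n : ℤ) n :=
  Fintype.mem_piFinset.2 fun i => floor_div_mem_Icc_of_abs_le hs <|
    (Real.dist_eq (q i) (p i) ▸ PiLp.dist_apply_le q p i).trans (dist_comm q p ▸ h)

lemma dist_le_of_gridCell_eq {p a b : EuclideanSpace ℝ ι} {s : ℝ} (hs : 0 < s)
    (h : gridCell p s a = gridCell p s b) : dist a b ≤ √(Fintype.card ι) * s := by
  have hcoord (i : ι) : dist (a i) (b i) ^ 2 ≤ s ^ 2 :=
    pow_le_pow_left₀ dist_nonneg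
      ((Real.dist_eq _ _).trans_le (abs_sub_lt_of_floor_div_eq hs (congrFun h i)).le) 2
  calc dist a b = √(∑ i, dist (a i) (b i) ^ 2) := EuclideanSpace.dist_eq a b
    _ ≤ √(∑ _i : ι, s ^ 2) := Real.sqrt_le_sqrt (sum_le_sum fun i _ => hcoord i)
    _ = √(Fintype.card ι) * s := by
      rw [sum_const, card_univ, nsmul_eq_mul, Real.sqrt_mul (Nat.cast_nonneg _),
        Real.sqrt_sq hs.le]

theorem card_filter_dist_le_le_of_separated [DecidableEq ι] {s : ℝ} (hs : 0 < s)
    {S : Finset (EuclideanSpace ℝ ι)}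
    (hS : ∀ u ∈ S, ∀ v ∈ S, u ≠ v → √(Fintype.card ι) * s < dist u v)
    (p : EuclideanSpace ℝ ι) (n : ℕ) :
    #{q ∈ S | dist p q ≤ n * s} ≤ (2 * n + 1) ^ Fintype.card ι := by
  calc #{q ∈ S | dist p q ≤ n * s}
      ≤ #(Fintype.piFinset fun _ : ι => Icc (-n : ℤ) n) := by
        refine card_le_card_of_injOn (gridCell p s)
          (fun q hq => gridCell_mem_piFinset hs (mem_filter.1 hq).2) fun a ha b hb hab => ?_
        by_contra hne
        exact (hS a (mem_filter.1 ha).1 b (mem_filter.1 hb).1 hne).not_ge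
          (dist_le_of_gridCell_eq hs hab)
    _ = (2 * n + 1) ^ Fintype.card ι := by
      rw [Fintype.card_piFinset, prod_const, card_univ, Int.card_Icc]
      congr 1
      omega

end GridCell

/-- If `S` is a set of points in the plane any two of which are at distance
greater than `r`, then at most `25` points of `S` lie within distance `3r` of any
point `p`. -/
theorem independent_points_in_disk_le_121 (r : ℝ) (hr : 0 < r)
    (S : Finset (EuclideanSpace ℝ (Fin 2)))
    (hS : ∀ u ∈ S, ∀ v ∈ S, u ≠ v → r < dist u v)
    (p : EuclideanSpace ℝ (Fin 2)) :
    (S.filter (fun q => dist p q ≤ 3 * r)).card ≤ 121 := by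
  have hsqrt2 : (0 : ℝ) < √2 := by positivity
  have hside : √(Fintype.card (Fin 2)) * (r / √2) = r := by
    rw [Fintype.card_fin, Nat.cast_ofNat, mul_div_cancel₀ r hsqrt2.ne']
  have hdisk : 3 * r ≤ (5 : ℕ) * (r / √2) := by
    have h3sqrt2 : 3 * √2 ≤ 5 := by nlinarith [Real.sq_sqrt (show (0 : ℝ) ≤ 2 by norm_num)]
    calc 3 * r = 3 * √2 * (r / √2) := by field_simp
      _ ≤ (5 : ℕ) * (r / √2) := by push_cast; gcongr
  calc #{q ∈ S | dist p q ≤ 3 * r}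
      ≤ #{q ∈ S | dist p q ≤ (5 : ℕ) * (r / √2)} :=
        card_le_card <| monotone_filter_right S fun _ _ h => h.trans hdisk
    _ ≤ (2 * 5 + 1) ^ Fintype.card (Fin 2) :=
        card_filter_dist_le_le_of_separated (div_pos hr hsqrt2) (by rwa [hside]) p 5
    _ = 121 := rfl
end

section
/- If M is a maximal independent set of a connected graph G with diameter D, and H is a connected dominating set obtained from M by adding connectors joining pairs of M-nodes at graph distance at most 3 (as above), then the diameter of the subgraph induced by H is O(D); specifically, any two nodes of H are joined in H by a path of length at most c·D + c' for absolute constants c, c'. -/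
/-!
Two dominators `x, y ∈ M` with `dist x y ≥ 2` can be brought closer: go two steps along a
shortest path from `x` to `y` and take a dominator `m` of the vertex reached. Then
`dist x m ≤ 3`, so the connector of `x` and `m` lies in `H` and has length at most `3`, while
`dist m y < dist x y`. Iterating joins `x` and `y` inside `H` by a walk of length at most
`3 · dist x y ≤ 3D`. Every other vertex of `H` lies on a connector, hence within `3` steps of a
dominator inside `H`, so `c = 3`, `c' = 6` work.
-/

namespace SimpleGraph

variable {V : Type*} {G : SimpleGraph V}

lemma Walk.length_induce (s : Set V) {u v : V} (p : G.Walk u v)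
    (hp : ∀ x ∈ p.support, x ∈ s) : (p.induce s hp).length = p.length :=
  (Walk.length_map _ _).symm.trans (congrArg Walk.length (p.map_induce hp))

lemma exists_mem_dist_le_one_of_dominating {M : Set V}
    (hM : ∀ v, v ∈ M ∨ ∃ u ∈ M, G.Adj u v) (v : V) : ∃ m ∈ M, G.dist m v ≤ 1 := by
  rcases hM v with hv | ⟨m, hm, hadj⟩
  · exact ⟨v, hv, by simp⟩
  · exact ⟨m, hm, (dist_eq_one_iff_adj.mpr hadj).le⟩

lemma Connected.exists_mem_dist_le_three_dist_lt_of_dominating (hG : G.Connected) {M : Set V}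
    (hM : ∀ v, v ∈ M ∨ ∃ u ∈ M, G.Adj u v) {x y : V} (hxy : 2 ≤ G.dist x y) :
    ∃ m ∈ M, G.dist x m ≤ 3 ∧ G.dist m y < G.dist x y := by
  obtain ⟨p, hp⟩ := hG.exists_walk_length_eq_dist x y
  have hxw : G.dist x (p.getVert 2) ≤ 2 :=
    (dist_le (p.take 2)).trans (by simp [Walk.take_length])
  have hwy : G.dist (p.getVert 2) y ≤ G.dist x y - 2 :=
    (dist_le (p.drop 2)).trans (by simp [Walk.drop_length, hp])
  obtain ⟨m, hm, hmw⟩ := exists_mem_dist_le_one_of_dominating hM (p.getVert 2)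
  refine ⟨m, hm, ?_, ?_⟩
  · have := hG.dist_triangle (u := x) (v := p.getVert 2) (w := m)
    rw [dist_comm (u := p.getVert 2)] at this
    omega
  · have := hG.dist_triangle (u := m) (v := p.getVert 2) (w := y)
    omega

variable {M H : Set V}

lemma Connected.exists_induce_walk_length_le_three_mul_dist (hG : G.Connected)
    (hMH : M ⊆ H) (hdom : ∀ v, v ∈ M ∨ ∃ u ∈ M, G.Adj u v)
    (hcon : ∀ u ∈ M, ∀ v ∈ M, G.dist u v ≤ 3 →
      ∃ p : G.Walk u v, p.length = G.dist u v ∧ ∀ w ∈ p.support, w ∈ H)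
    {x y : H} (hx : (x : V) ∈ M) (hy : (y : V) ∈ M) :
    ∃ q : (G.induce H).Walk x y, q.length ≤ 3 * G.dist x y := by
  have connector : ∀ {u v : H}, (u : V) ∈ M → (v : V) ∈ M → G.dist u v ≤ 3 →
      ∃ q : (G.induce H).Walk u v, q.length = G.dist u v := by
    intro u v hu hv huv
    obtain ⟨p, hp, hpH⟩ := hcon u hu v hv huv
    exact ⟨p.induce H hpH, (p.length_induce H hpH).trans hp⟩
  induction hn : G.dist x y using Nat.strong_induction_on generalizing x with
  | _ n ih =>
    by_cases hn3 : n ≤ 3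
    · obtain ⟨q, hq⟩ := connector hx hy (hn ▸ hn3)
      exact ⟨q, by omega⟩
    obtain ⟨m, hm, hxm, hmy⟩ := hG.exists_mem_dist_le_three_dist_lt_of_dominating hdom
      (x := x) (y := y) (by omega)
    obtain ⟨q₁, hq₁⟩ := connector (v := ⟨m, hMH hm⟩) hx hm hxm
    obtain ⟨q₂, hq₂ : q₂.length ≤ 3 * G.dist m y⟩ :=
      ih _ (hn ▸ hmy) (x := ⟨m, hMH hm⟩) hm rfl
    refine ⟨q₁.append q₂, ?_⟩
    simp only [Walk.length_append] at hq₁ ⊢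
    omega

lemma exists_induce_walk_from_mem_length_le_three (hMH : M ⊆ H)
    (hH : ∀ h ∈ H, h ∈ M ∨ ∃ u ∈ M, ∃ v ∈ M, ∃ p : G.Walk u v,
      p.length = G.dist u v ∧ G.dist u v ≤ 3 ∧ (∀ w ∈ p.support, w ∈ H) ∧ h ∈ p.support)
    (a : H) : ∃ m : H, (m : V) ∈ M ∧ ∃ q : (G.induce H).Walk m a, q.length ≤ 3 := by
  classical
  rcases hH a a.2 with haM | ⟨u, hu, v, -, p, hp, hp3, hpH, ha⟩
  · exact ⟨a, haM, .nil, by simp⟩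
  have hpH' : ∀ w ∈ (p.takeUntil a ha).support, w ∈ H :=
    fun w hw => hpH w (p.support_takeUntil_subset_support ha hw)
  refine ⟨⟨u, hMH hu⟩, hu, (p.takeUntil a ha).induce H hpH', ?_⟩
  have := p.length_takeUntil_le_length ha
  rw [Walk.length_induce]
  omega

end SimpleGraph

open SimpleGraph in
/-- If `M` is a maximal independent set of a finite connected graph `G` of
diameter at most `D`, and `H ⊇ M` is obtained by adding, for each pair of
`M`-nodes at graph distance at most `3`, the internal vertices of one shortest
connecting path, then any two nodes of `H` are joined inside `H` by a path of
length at most `c·D + c'` for absolute constants `c, c'`. -/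
theorem cds_diameter_linear :
    ∃ c c' : ℕ, ∀ {V : Type} [Fintype V] (G : SimpleGraph V) (D : ℕ),
      G.Connected → (∀ u v : V, G.dist u v ≤ D) →
      ∀ (M : Set V),
        (∀ u ∈ M, ∀ v ∈ M, ¬G.Adj u v) →
        (∀ v : V, v ∈ M ∨ ∃ u ∈ M, G.Adj u v) →
      ∀ (H : Set V), M ⊆ H →
        (∀ u ∈ M, ∀ v ∈ M, G.dist u v ≤ 3 →
          ∃ p : G.Walk u v, p.length = G.dist u v ∧ ∀ w ∈ p.support, w ∈ H) →
        (∀ h ∈ H, h ∈ M ∨ ∃ u ∈ M, ∃ v ∈ M, ∃ p : G.Walk u v,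
          p.length = G.dist u v ∧ G.dist u v ≤ 3 ∧ (∀ w ∈ p.support, w ∈ H) ∧
          h ∈ p.support) →
      ∀ a b : H, ∃ p : (G.induce H).Walk a b, p.length ≤ c * D + c' := by
  refine ⟨3, 6, fun G D hG hD M _ hdom H hMH hcon hH a b => ?_⟩
  obtain ⟨ma, hma, qa, hqa⟩ := exists_induce_walk_from_mem_length_le_three hMH hH a
  obtain ⟨mb, hmb, qb, hqb⟩ := exists_induce_walk_from_mem_length_le_three hMH hH b
  obtain ⟨q, hq⟩ := hG.exists_induce_walk_length_le_three_mul_dist hMH hdom hcon hma hmb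
  refine ⟨qa.reverse.append (q.append qb), ?_⟩
  have := hD ma mb
  simp only [Walk.length_append, Walk.length_reverse]
  omega
end
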